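/- arXiv:2509.22140 — 6 statements merged into one kernel-verified Lean document; each statement's English description precedes it below -/
import Mathlib

section
/- Let d ≥ 3 be an integer and let w_e, w_g : [0,∞) → ℝ_{>0} be positive differentiable functions with w_e(t) ≥ w_g(t) for all t, w_e(t) - w_g(t) = (w_e(0) - w_g(0)) e^{-t}, and w_g'(t) ≥ -(1 - (d-2)/d) w_g(t) for all t. Then 0 ≤ w_e(t)/w_g(t) - 1 ≤ (w_e(0)/w_g(0) - 1) e^{-((d-2)/d) t}, hence lim_{t→∞} w_e(t)/w_g(t) = 1. -/
/-!
Since `1 - (d-2)/d = 2/d`, the lower bound on `w_g'` says that `w_g(t) e^{(2/d) t}` is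
nondecreasing, so `w_g(t) ≥ w_g(0) e^{-(2/d) t}`. Dividing the exact decay
`w_e - w_g = (w_e(0) - w_g(0)) e^{-t}` by this bound gives
`w_e/w_g - 1 ≤ (w_e(0)/w_g(0) - 1) e^{-((d-2)/d) t}`; for `d > 2` the rate is positive, and the
ratio converges to 1 by squeezing.
-/

open Real Set Filter Topology

section ExpLowerBound

variable {f : ℝ → ℝ} {c : ℝ}

theorem monotoneOn_mul_exp_of_neg_mul_le_deriv (hf : ∀ t, 0 ≤ t → DifferentiableAt ℝ f t)
    (hf' : ∀ t, 0 ≤ t → -c * f t ≤ deriv f t) :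
    MonotoneOn (fun t => f t * exp (c * t)) (Ici 0) := by
  have hderiv : ∀ t, 0 ≤ t → HasDerivAt (fun t => f t * exp (c * t))
      ((deriv f t + c * f t) * exp (c * t)) t := by
    intro t ht
    have hexp : HasDerivAt (fun t => exp (c * t)) (exp (c * t) * c) t := by
      simpa using ((hasDerivAt_id t).const_mul c).exp
    exact ((hf t ht).hasDerivAt.mul hexp).congr_deriv (by ring)
  refine monotoneOn_of_hasDerivWithinAt_nonneg (convex_Ici 0)
    (fun t ht => (hderiv t ht).continuousAt.continuousWithinAt)
    (fun t ht => (hderiv t (interior_subset ht)).hasDerivWithinAt) fun t ht => ?_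
  exact mul_nonneg (by linarith [hf' t (interior_subset ht)]) (exp_pos _).le

theorem apply_zero_mul_exp_le_of_neg_mul_le_deriv (hf : ∀ t, 0 ≤ t → DifferentiableAt ℝ f t)
    (hf' : ∀ t, 0 ≤ t → -c * f t ≤ deriv f t) {t : ℝ} (ht : 0 ≤ t) :
    f 0 * exp (-c * t) ≤ f t := by
  have hmono := monotoneOn_mul_exp_of_neg_mul_le_deriv hf hf' self_mem_Ici (mem_Ici.2 ht) ht
  simp only [mul_zero, exp_zero, mul_one] at hmono
  calc f 0 * exp (-c * t) ≤ f t * exp (c * t) * exp (-c * t) := by gcongr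
    _ = f t := by rw [mul_assoc, ← exp_add]; simp

end ExpLowerBound

theorem div_sub_one_le_mul_exp {x y x₀ y₀ α t : ℝ} (hy₀ : 0 < y₀) (hxy₀ : y₀ ≤ x₀)
    (hsub : x - y = (x₀ - y₀) * exp (-t)) (hy : y₀ * exp (-(1 - α) * t) ≤ y) :
    x / y - 1 ≤ (x₀ / y₀ - 1) * exp (-α * t) := by
  have hy_pos : 0 < y := lt_of_lt_of_le (by positivity) hy
  have hsplit : exp (-t) = exp (-α * t) * exp (-(1 - α) * t) := by rw [← exp_add]; ring_nf
  have hD : 0 ≤ (x₀ - y₀) * exp (-t) := mul_nonneg (sub_nonneg.2 hxy₀) (exp_pos _).le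
  rw [div_sub_one hy_pos.ne', hsub]
  calc (x₀ - y₀) * exp (-t) / y ≤ (x₀ - y₀) * exp (-t) / (y₀ * exp (-(1 - α) * t)) :=
        div_le_div_of_nonneg_left hD (by positivity) hy
    _ = (x₀ / y₀ - 1) * exp (-α * t) := by
        rw [hsplit]; field_simp

theorem tendsto_one_of_sub_one_le_mul_exp {r : ℝ → ℝ} {C α : ℝ} (hα : 0 < α)
    (h : ∀ t, 0 ≤ t → 0 ≤ r t - 1 ∧ r t - 1 ≤ C * exp (-α * t)) :
    Tendsto r atTop (𝓝 1) := by
  have hdecay : Tendsto (fun t => 1 + C * exp (-α * t)) atTop (𝓝 1) := by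
    have hexp : Tendsto (fun t => exp (-α * t)) atTop (𝓝 0) :=
      tendsto_exp_atBot.comp (tendsto_id.const_mul_atTop_of_neg (neg_neg_of_pos hα))
    simpa using (hexp.const_mul C).const_add 1
  refine tendsto_of_tendsto_of_tendsto_of_le_of_le' tendsto_const_nhds hdecay ?_ ?_ <;>
    filter_upwards [eventually_ge_atTop 0] with t ht <;> linarith [h t ht]

theorem stmt3_general (d : ℕ) (hd : 3 ≤ d) (we wg : ℝ → ℝ)
    (hpos_g : ∀ t : ℝ, 0 ≤ t → 0 < wg t)
    (hge : ∀ t : ℝ, 0 ≤ t → wg t ≤ we t)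
    (hdiff : ∀ t : ℝ, 0 ≤ t → we t - wg t = (we 0 - wg 0) * Real.exp (-t))
    (hderiv : ∀ t : ℝ, 0 ≤ t → DifferentiableAt ℝ wg t ∧
      -(1 - ((d : ℝ) - 2) / d) * wg t ≤ deriv wg t) :
    (∀ t : ℝ, 0 ≤ t →
        0 ≤ we t / wg t - 1 ∧
          we t / wg t - 1 ≤ (we 0 / wg 0 - 1) * Real.exp (-(((d : ℝ) - 2) / d) * t)) ∧
      Filter.Tendsto (fun t => we t / wg t) Filter.atTop (nhds 1) := by
  have hα : 0 < ((d : ℝ) - 2) / d := by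
    have : (3 : ℝ) ≤ d := by exact_mod_cast hd
    apply div_pos <;> linarith
  have bound : ∀ t : ℝ, 0 ≤ t → 0 ≤ we t / wg t - 1 ∧
      we t / wg t - 1 ≤ (we 0 / wg 0 - 1) * exp (-(((d : ℝ) - 2) / d) * t) := by
    intro t ht
    refine ⟨?_, div_sub_one_le_mul_exp (hpos_g 0 le_rfl) (hge 0 le_rfl) (hdiff t ht)
      (apply_zero_mul_exp_le_of_neg_mul_le_deriv (fun s hs => (hderiv s hs).1)
        (fun s hs => (hderiv s hs).2) ht)⟩
    rw [sub_nonneg, one_le_div (hpos_g t ht)]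
    exact hge t ht
  exact ⟨bound, tendsto_one_of_sub_one_le_mul_exp hα bound⟩

/-- Ratio of two leaf weights sharing a vertex of degree `d ≥ 3`
converges exponentially to 1. -/
theorem stmt3 (d : ℕ) (hd : 3 ≤ d) (we wg : ℝ → ℝ)
    (hpos_e : ∀ t : ℝ, 0 ≤ t → 0 < we t) (hpos_g : ∀ t : ℝ, 0 ≤ t → 0 < wg t)
    (hge : ∀ t : ℝ, 0 ≤ t → wg t ≤ we t)
    (hdiff : ∀ t : ℝ, 0 ≤ t → we t - wg t = (we 0 - wg 0) * Real.exp (-t))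
    (hderiv : ∀ t : ℝ, 0 ≤ t → DifferentiableAt ℝ wg t ∧
      -(1 - ((d : ℝ) - 2) / d) * wg t ≤ deriv wg t) :
    (∀ t : ℝ, 0 ≤ t →
        0 ≤ we t / wg t - 1 ∧
          we t / wg t - 1 ≤ (we 0 / wg 0 - 1) * Real.exp (-(((d : ℝ) - 2) / d) * t)) ∧
      Filter.Tendsto (fun t => we t / wg t) Filter.atTop (nhds 1) :=
  stmt3_general d hd we wg hpos_g hge hdiff hderiv
end

section
/- Let w solve the un-normalized Ricci flow on a finite tree with curvature κ_{uv} = (2-d_u)/(w_{uv}D_u) + (2-d_v)/(w_{uv}D_v). Let e be a leaf edge and f = uv an internal edge sharing the vertex u (so d_v ≥ 2). Then d/dt (w_f(t) - w_e(t)) = w_e(t) + (d_v - 2)/D_v(t) > 0 for all t, i.e. w_f - w_e is strictly increasing along the flow. -/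
open Finset

/-! Both edges evolve by `w' = -κ w`. At `u` each edge picks up the same contribution
`(d_u - 2)/D_u`, so it cancels in `w_f' - w_e'`. At the leaf `x` one has `D_x = 1/w_e`,
so `e` contributes `w_e`, while `f` contributes `(d_v - 2)/D_v ≥ 0` at `v`. -/

namespace SimpleGraph

variable {V : Type*} (G : SimpleGraph V)

lemma neighborFinset_eq_singleton_of_degree_eq_one {u x : V} [Fintype (G.neighborSet x)]
    (hxu : G.Adj x u) (hx : G.degree x = 1) : G.neighborFinset x = {u} := by
  obtain ⟨a, ha⟩ := card_eq_one.mp ((G.card_neighborFinset_eq_degree x).trans hx)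
  have hu : u ∈ G.neighborFinset x := (G.mem_neighborFinset x u).mpr hxu
  rw [ha, mem_singleton] at hu
  rw [ha, hu]

lemma sum_one_div_pos {u v : V} [Fintype (G.neighborSet u)] {w : V → ℝ}
    (hpos : ∀ y, G.Adj u y → 0 < w y) (huv : G.Adj u v) :
    0 < ∑ y ∈ G.neighborFinset u, 1 / w y :=
  sum_pos (fun y hy => one_div_pos.mpr (hpos y ((G.mem_neighborFinset u y).mp hy)))
    ⟨v, (G.mem_neighborFinset u v).mpr huv⟩

end SimpleGraph

-- The second edge is a leaf edge: its far endpoint has degree `1` and `D = 1 / we`.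
lemma neg_curvature_mul_sub_neg_leaf_curvature_mul {we wf du dv Du Dv : ℝ}
    (hwe : we ≠ 0) (hwf : wf ≠ 0) :
    -((2 - du) / (wf * Du) + (2 - dv) / (wf * Dv)) * wf
        - -((2 - du) / (we * Du) + (2 - 1) / (we * (1 / we))) * we
      = we + (dv - 2) / Dv := by
  field_simp
  ring

lemma strictMonoOn_Ici_of_hasDerivAt_pos {f f' : ℝ → ℝ} {a : ℝ}
    (hf : ∀ t ∈ Set.Ici a, HasDerivAt f (f' t) t) (hf' : ∀ t ∈ Set.Ici a, 0 < f' t) :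
    StrictMonoOn f (Set.Ici a) :=
  strictMonoOn_of_deriv_pos (convex_Ici a) (fun t ht => (hf t ht).continuousAt.continuousWithinAt)
    fun t ht => by
      rw [interior_Ici, Set.mem_Ioi] at ht
      rw [(hf t (Set.mem_Ici.mpr ht.le)).deriv]
      exact hf' t (Set.mem_Ici.mpr ht.le)

theorem stmt9_general {V : Type*} [Fintype V] (G : SimpleGraph V)
    [DecidableRel G.Adj]
    (w : ℝ → V → V → ℝ)
    (hsymm : ∀ t u v, w t u v = w t v u)
    (hpos : ∀ t : ℝ, 0 ≤ t → ∀ u v, G.Adj u v → 0 < w t u v)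
    (D : ℝ → V → ℝ) (hD : ∀ t u, D t u = ∑ v ∈ G.neighborFinset u, 1 / w t u v)
    (κ : ℝ → V → V → ℝ)
    (hκ : ∀ t u v, G.Adj u v → κ t u v =
      (2 - (G.degree u : ℝ)) / (w t u v * D t u) + (2 - (G.degree v : ℝ)) / (w t u v * D t v))
    (hflow : ∀ u v, G.Adj u v → ∀ t : ℝ, 0 ≤ t →
      HasDerivAt (fun s => w s u v) (-(κ t u v) * w t u v) t)
    (u x v : V) (hux : G.Adj u x) (hx : G.degree x = 1)
    (huv : G.Adj u v) (hdv : 2 ≤ G.degree v) :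
    (∀ t : ℝ, 0 ≤ t →
        HasDerivAt (fun s => w s u v - w s u x)
          (w t u x + ((G.degree v : ℝ) - 2) / D t v) t ∧
        0 < w t u x + ((G.degree v : ℝ) - 2) / D t v) ∧
      StrictMonoOn (fun t => w t u v - w t u x) (Set.Ici (0 : ℝ)) := by
  have hDx : ∀ t, D t x = 1 / w t u x := fun t => by
    rw [hD, G.neighborFinset_eq_singleton_of_degree_eq_one hux.symm hx, sum_singleton, hsymm]
  have hderiv : ∀ t : ℝ, 0 ≤ t →
      HasDerivAt (fun s => w s u v - w s u x) (w t u x + ((G.degree v : ℝ) - 2) / D t v) t ∧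
        0 < w t u x + ((G.degree v : ℝ) - 2) / D t v := by
    intro t ht
    have hwx : 0 < w t u x := hpos t ht u x hux
    constructor
    · have h := (hflow u v huv t ht).sub (hflow u x hux t ht)
      rwa [hκ t u v huv, hκ t u x hux, hDx, hx, Nat.cast_one,
        neg_curvature_mul_sub_neg_leaf_curvature_mul hwx.ne' (hpos t ht u v huv).ne'] at h
    · have hDv : 0 < D t v := hD t v ▸ G.sum_one_div_pos (hpos t ht v) huv.symm
      have hdv' : (2 : ℝ) ≤ G.degree v := by exact_mod_cast hdv
      have := div_nonneg (sub_nonneg.mpr hdv') hDv.le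
      linarith
  exact ⟨hderiv, strictMonoOn_Ici_of_hasDerivAt_pos (fun t ht => (hderiv t ht).1)
    (fun t ht => (hderiv t ht).2)⟩

/-- Along the flow, the difference between the weight of an internal edge `f = uv`
and that of a leaf edge `e = ux` at the same vertex `u` has derivative
`w_e + (d_v - 2)/D_v > 0`, hence is strictly increasing. -/
theorem stmt9 {V : Type*} [Fintype V] [DecidableEq V] (G : SimpleGraph V)
    [DecidableRel G.Adj] (hT : G.IsTree)
    (w : ℝ → V → V → ℝ)
    (hsymm : ∀ t u v, w t u v = w t v u)
    (hpos : ∀ t : ℝ, 0 ≤ t → ∀ u v, G.Adj u v → 0 < w t u v)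
    (D : ℝ → V → ℝ) (hD : ∀ t u, D t u = ∑ v ∈ G.neighborFinset u, 1 / w t u v)
    (κ : ℝ → V → V → ℝ)
    (hκ : ∀ t u v, G.Adj u v → κ t u v =
      (2 - (G.degree u : ℝ)) / (w t u v * D t u) + (2 - (G.degree v : ℝ)) / (w t u v * D t v))
    (hflow : ∀ u v, G.Adj u v → ∀ t : ℝ, 0 ≤ t →
      HasDerivAt (fun s => w s u v) (-(κ t u v) * w t u v) t)
    (u x v : V) (hux : G.Adj u x) (hx : G.degree x = 1)
    (huv : G.Adj u v) (hdv : 2 ≤ G.degree v) :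
    (∀ t : ℝ, 0 ≤ t →
        HasDerivAt (fun s => w s u v - w s u x)
          (w t u x + ((G.degree v : ℝ) - 2) / D t v) t ∧
        0 < w t u x + ((G.degree v : ℝ) - 2) / D t v) ∧
      StrictMonoOn (fun t => w t u v - w t u x) (Set.Ici (0 : ℝ)) :=
  stmt9_general G w hsymm hpos D hD κ hκ hflow u x v hux hx huv hdv
end

section
/- Let e be a leaf edge incident to vertex u in a finite weighted tree, where u is incident to d_u' leaf edges and d_u'' internal edges with d_u = d_u' + d_u''. Suppose w_e ≥ w_g for every leaf edge g incident to u. Then the curvature κ_e = 1 - (d_u - 2)/(w_e D_u) satisfies κ_e > 1 - (d_u - 2)/d_u'. -/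
open Finset

/- `w_e D_u = Σ_{g ∼ u} w_e / w_g`: each leaf term is at least `1` by maximality of `w_e`, and the
internal neighbour contributes a further positive term, so `w_e D_u > d_u'` and hence
`(d_u - 2) / (w_e D_u) < (d_u - 2) / d_u'`. -/

lemma card_filter_lt_sum_div {α : Type*} {s : Finset α} {p : α → Prop} [DecidablePred p]
    {f : α → ℝ} {c : ℝ} (hc : 0 < c) (hf : ∀ v ∈ s, 0 < f v)
    (hle : ∀ v ∈ s.filter p, f v ≤ c) (hne : ∃ y ∈ s, ¬ p y) :
    ((s.filter p).card : ℝ) < ∑ v ∈ s, c / f v := by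
  rw [← sum_filter_add_sum_filter_not s p]
  have h_leaves : ((s.filter p).card : ℝ) ≤ ∑ v ∈ s.filter p, c / f v := by
    rw [card_eq_sum_ones, Nat.cast_sum, Nat.cast_one]
    exact sum_le_sum fun v hv => (one_le_div (hf v (mem_filter.1 hv).1)).2 (hle v hv)
  have h_rest : 0 < ∑ v ∈ s.filter (¬ p ·), c / f v := by
    obtain ⟨y, hys, hy⟩ := hne
    exact sum_pos (fun v hv => div_pos hc (hf v (mem_filter.1 hv).1)) ⟨y, mem_filter.2 ⟨hys, hy⟩⟩
  linarith

theorem stmt10_general {V : Type*} [Fintype V] (G : SimpleGraph V)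
    [DecidableRel G.Adj]
    (w : V → V → ℝ)
    (hpos : ∀ u v, G.Adj u v → 0 < w u v)
    (D : V → ℝ) (hD : ∀ u, D u = ∑ v ∈ G.neighborFinset u, 1 / w u v)
    (u x : V) (hux : G.Adj u x) (hx : G.degree x = 1) (hdu : 3 ≤ G.degree u)
    (hinternal : ∃ y ∈ G.neighborFinset u, 2 ≤ G.degree y)
    (hmax : ∀ g ∈ (G.neighborFinset u).filter (fun y => G.degree y = 1), w u g ≤ w u x) :
    1 - ((G.degree u : ℝ) - 2) /
        (((G.neighborFinset u).filter (fun y => G.degree y = 1)).card : ℝ) <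
      1 - ((G.degree u : ℝ) - 2) / (w u x * D u) := by
  have h_leaves_pos : (0 : ℝ) < ((G.neighborFinset u).filter (fun y => G.degree y = 1)).card := by
    exact_mod_cast card_pos.2 ⟨x, mem_filter.2 ⟨(G.mem_neighborFinset u x).2 hux, hx⟩⟩
  have h_leaves_lt : (((G.neighborFinset u).filter (fun y => G.degree y = 1)).card : ℝ)
      < w u x * D u := by
    rw [hD, mul_sum]
    simp only [mul_one_div]
    obtain ⟨y, hy, hy_deg⟩ := hinternal
    exact card_filter_lt_sum_div (hpos u x hux)
      (fun v hv => hpos u v ((G.mem_neighborFinset u v).1 hv)) hmax ⟨y, hy, by omega⟩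
  have h_num_pos : (0 : ℝ) < (G.degree u : ℝ) - 2 := by
    have : (3 : ℝ) ≤ G.degree u := by exact_mod_cast hdu
    linarith
  exact sub_lt_sub_left (div_lt_div_of_pos_left h_num_pos h_leaves_pos h_leaves_lt) 1

/-- Static estimate: if the leaf edge `ux` has maximal weight among the leaf edges
at `u`, and `u` has at least one internal neighbor, then
`κ_e > 1 - (d_u - 2)/d_u'`. -/
theorem stmt10 {V : Type*} [Fintype V] [DecidableEq V] (G : SimpleGraph V)
    [DecidableRel G.Adj] (hT : G.IsTree)
    (w : V → V → ℝ) (hsymm : ∀ u v, w u v = w v u)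
    (hpos : ∀ u v, G.Adj u v → 0 < w u v)
    (D : V → ℝ) (hD : ∀ u, D u = ∑ v ∈ G.neighborFinset u, 1 / w u v)
    (u x : V) (hux : G.Adj u x) (hx : G.degree x = 1) (hdu : 3 ≤ G.degree u)
    (hinternal : ∃ y ∈ G.neighborFinset u, 2 ≤ G.degree y)
    (hmax : ∀ g ∈ (G.neighborFinset u).filter (fun y => G.degree y = 1), w u g ≤ w u x) :
    1 - ((G.degree u : ℝ) - 2) /
        (((G.neighborFinset u).filter (fun y => G.degree y = 1)).card : ℝ) <
      1 - ((G.degree u : ℝ) - 2) / (w u x * D u) :=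
  stmt10_general G w hpos D hD u x hux hx hdu hinternal hmax
end

section
/- In a finite tree that is not a caterpillar tree (equivalently, contains a vertex incident to at least three internal edges), there exist at least three distinct internal vertices v each of which is adjacent to exactly d_v - 1 leaves. -/
/-!
Root the tree at `v₀` and take three internal neighbours `y` of `v₀`. Within the branch of `y`
(the vertices whose path to `v₀` passes through `y`), an internal vertex `w` farthest from `v₀`
has only leaves among its children, since an internal child would lie farther out in the same
branch; its parent is internal, being `v₀` or having a parent of its own. The three branches are
disjoint, so the three vertices `w` are distinct.
-/

open Finset

namespace SimpleGraph

variable {V : Type*} {G : SimpleGraph V}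

lemma Connected.exists_adj_dist_add_one_eq (hG : G.Connected) {x w : V} (hxw : x ≠ w) :
    ∃ u, G.Adj u w ∧ G.dist x u + 1 = G.dist x w := by
  obtain ⟨p, hp⟩ := hG.exists_walk_length_eq_dist x w
  have hnil : ¬p.Nil := fun h => hxw h.eq
  refine ⟨p.penultimate, p.adj_penultimate hnil, le_antisymm ?_ ?_⟩
  · have := p.length_dropLast_add_one hnil
    have := dist_le p.dropLast
    omega
  · have := hG.dist_triangle (u := x) (v := p.penultimate) (w := w)
    have := dist_eq_one_iff_adj.mpr (p.adj_penultimate hnil)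
    omega

lemma IsTree.eq_of_adj_of_dist_add_one_eq (hG : G.IsTree) {x w u₁ u₂ : V}
    (h₁ : G.Adj u₁ w) (h₂ : G.Adj u₂ w)
    (hd₁ : G.dist x u₁ + 1 = G.dist x w) (hd₂ : G.dist x u₂ + 1 = G.dist x w) : u₁ = u₂ := by
  obtain ⟨p₁, hp₁⟩ := hG.connected.exists_walk_length_eq_dist x u₁
  obtain ⟨p₂, hp₂⟩ := hG.connected.exists_walk_length_eq_dist x u₂
  have hq₁ : (p₁.concat h₁).IsPath := Walk.isPath_of_length_eq_dist _ (by simp [hp₁, hd₁])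
  have hq₂ : (p₂.concat h₂).IsPath := Walk.isPath_of_length_eq_dist _ (by simp [hp₂, hd₂])
  have := (hG.isAcyclic.subsingleton_path x w).elim ⟨_, hq₁⟩ ⟨_, hq₂⟩
  exact (Walk.concat_inj (congrArg Subtype.val this)).1

variable [Fintype V] [DecidableRel G.Adj]

lemma two_le_degree_of_adj_of_adj [DecidableEq V] {u a b : V} (ha : G.Adj u a) (hb : G.Adj u b)
    (hab : a ≠ b) : 2 ≤ G.degree u := by
  rw [← card_neighborFinset_eq_degree, ← card_pair hab]
  exact card_le_card (by simp [insert_subset_iff, ha, hb])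

lemma card_filter_neighborFinset_degree_eq_one_eq_degree_sub_one {w u : V} (hu : G.Adj w u)
    (hu₁ : G.degree u ≠ 1)
    (hleaf : ∀ z, G.Adj w z → z ≠ u → G.degree z = 1) :
    #{z ∈ G.neighborFinset w | G.degree z = 1} = G.degree w - 1 := by
  classical
  have : {z ∈ G.neighborFinset w | G.degree z = 1} = (G.neighborFinset w).erase u := by
    ext z
    simp only [mem_filter, mem_erase, mem_neighborFinset]
    exact ⟨fun ⟨hz, hz₁⟩ => ⟨fun h => hu₁ (h ▸ hz₁), hz⟩, fun ⟨hne, hz⟩ => ⟨hz, hleaf z hz hne⟩⟩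
  rw [this, card_erase_of_mem (by simpa using hu), card_neighborFinset_eq_degree]

lemma IsTree.exists_internal_all_but_one_leaf_of_adj (hG : G.IsTree) {x y : V}
    (hxy : G.Adj x y) (hx : 2 ≤ G.degree x) (hy : 2 ≤ G.degree y) :
    ∃ w, G.dist y w + 1 = G.dist x w ∧ 2 ≤ G.degree w ∧
      #{z ∈ G.neighborFinset w | G.degree z = 1} = G.degree w - 1 := by
  classical
  set B : Finset V := {w | 2 ≤ G.degree w ∧ G.dist y w + 1 = G.dist x w}
  have hyB : y ∈ B := by simp [B, hy, (dist_eq_one_iff_adj.mpr hxy)]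
  obtain ⟨w, hwB, hmax⟩ := exists_max_image B (G.dist x) ⟨y, hyB⟩
  obtain ⟨hw, hwy⟩ : 2 ≤ G.degree w ∧ G.dist y w + 1 = G.dist x w := by simpa [B] using hwB
  obtain ⟨u, huw, hu⟩ := hG.connected.exists_adj_dist_add_one_eq (x := x) (w := w)
    (by rintro rfl; simp at hwy)
  refine ⟨w, hwy, hw, card_filter_neighborFinset_degree_eq_one_eq_degree_sub_one huw.symm ?_ ?_⟩
  · rcases eq_or_ne x u with rfl | hux
    · omega
    obtain ⟨u', hu'u, hu'⟩ := hG.connected.exists_adj_dist_add_one_eq hux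
    have hu'w : u' ≠ w := by rintro rfl; omega
    have := two_le_degree_of_adj_of_adj hu'u.symm huw hu'w
    omega
  · intro z hwz hzu
    have hxz : G.dist x z = G.dist x w + 1 := by
      refine (hG.dist_eq_dist_add_one_of_adj x hwz).resolve_left fun h => hzu ?_
      exact hG.eq_of_adj_of_dist_add_one_eq hwz.symm huw h.symm hu
    by_contra hz
    have : 0 < G.degree z := G.degree_pos_iff_exists_adj z |>.mpr ⟨w, hwz.symm⟩
    have hyz : G.dist y z + 1 = G.dist x z := by
      have := hG.connected.dist_triangle (u := y) (v := w) (w := z)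
      have := hG.connected.dist_triangle (u := x) (v := y) (w := z)
      have := dist_eq_one_iff_adj.mpr hwz
      have := dist_eq_one_iff_adj.mpr hxy
      omega
    have := hmax z (by simp [B, hyz]; omega)
    omega

end SimpleGraph

open SimpleGraph in
/-- In a finite non-caterpillar tree (a tree containing a vertex incident to at
least three internal edges), there are at least three distinct internal vertices
each adjacent to exactly `d_v - 1` leaves. -/
theorem stmt12 {V : Type*} [Fintype V] [DecidableEq V] (G : SimpleGraph V)
    [DecidableRel G.Adj] (hT : G.IsTree)
    (v₀ : V)
    (hnc : 3 ≤ ((G.neighborFinset v₀).filter (fun y => 2 ≤ G.degree y)).card) :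
    ∃ S : Finset V, 3 ≤ S.card ∧ ∀ v ∈ S, 2 ≤ G.degree v ∧
      ((G.neighborFinset v).filter (fun y => G.degree y = 1)).card = G.degree v - 1 := by
  obtain ⟨y₁, hy₁, y₂, hy₂, y₃, hy₃, h₁₂, h₁₃, h₂₃⟩ := two_lt_card.mp hnc
  simp only [mem_filter, mem_neighborFinset] at hy₁ hy₂ hy₃
  have h₀ : 2 ≤ G.degree v₀ := two_le_degree_of_adj_of_adj hy₁.1 hy₂.1 h₁₂
  obtain ⟨w₁, hw₁, hS₁⟩ := hT.exists_internal_all_but_one_leaf_of_adj hy₁.1 h₀ hy₁.2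
  obtain ⟨w₂, hw₂, hS₂⟩ := hT.exists_internal_all_but_one_leaf_of_adj hy₂.1 h₀ hy₂.2
  obtain ⟨w₃, hw₃, hS₃⟩ := hT.exists_internal_all_but_one_leaf_of_adj hy₃.1 h₀ hy₃.2
  -- seen from `w`, the neighbour of `v₀` on the branch containing `w` is the parent of `v₀`
  have branch_unique : ∀ {y y' w}, G.Adj v₀ y → G.Adj v₀ y' →
      G.dist y w + 1 = G.dist v₀ w → G.dist y' w + 1 = G.dist v₀ w → y = y' := by
    intro y y' w hy hy' hw hw'
    exact hT.eq_of_adj_of_dist_add_one_eq hy.symm hy'.symm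
      (by rw [dist_comm, hw, dist_comm]) (by rw [dist_comm, hw', dist_comm])
  refine ⟨{w₁, w₂, w₃}, (card_eq_three.mpr ⟨w₁, w₂, w₃, ?_, ?_, ?_, rfl⟩).ge, ?_⟩
  · exact fun h => h₁₂ (branch_unique hy₁.1 hy₂.1 hw₁ (h ▸ hw₂))
  · exact fun h => h₁₃ (branch_unique hy₁.1 hy₃.1 hw₁ (h ▸ hw₃))
  · exact fun h => h₂₃ (branch_unique hy₂.1 hy₃.1 hw₂ (h ▸ hw₃))
  · simp only [mem_insert, mem_singleton]
    rintro v (rfl | rfl | rfl) <;> assumption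
end

section
/- For a leaf edge e at vertex u with curvature κ_e = 1 - (d_u - 2)/(w_e D_u) and all incident weights evolving by w_{uv}' = -κ_{uv} w_{uv}, the derivative of the curvature satisfies κ_e'(t) = (d_u - 2)/(w_e D_u) · ( (Σ_{v∼u} κ_{uv}/w_{uv}) / (Σ_{v∼u} 1/w_{uv}) - κ_e ). -/
open Finset

theorem HasDerivAt.one_div_of_hasDerivAt_neg_mul {f : ℝ → ℝ} {k t : ℝ}
    (hf : HasDerivAt f (-k * f t) t) (hft : f t ≠ 0) :
    HasDerivAt (fun s => 1 / f s) (k / f t) t := by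
  simp only [one_div]
  exact (hf.inv hft).congr_deriv (by field_simp)

theorem HasDerivAt.one_sub_const_div_mul {f g : ℝ → ℝ} {k g' c t : ℝ}
    (hf : HasDerivAt f (-k * f t) t) (hg : HasDerivAt g g' t) (hf0 : f t ≠ 0)
    (hg0 : g t ≠ 0) :
    HasDerivAt (fun s => 1 - c / (f s * g s)) (c / (f t * g t) * (g' / g t - k)) t := by
  refine (((hasDerivAt_const t c).fun_div (hf.fun_mul hg) (mul_ne_zero hf0 hg0)).const_sub
    1).congr_deriv ?_
  field_simp
  ring

theorem stmt17_general {V : Type*} [Fintype V] (G : SimpleGraph V)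
    [DecidableRel G.Adj]
    (w : ℝ → V → V → ℝ)
    (hpos : ∀ t : ℝ, ∀ u v, G.Adj u v → 0 < w t u v)
    (D : ℝ → V → ℝ) (hD : ∀ t u, D t u = ∑ v ∈ G.neighborFinset u, 1 / w t u v)
    (κ : ℝ → V → V → ℝ)
    (u x : V) (hux : G.Adj u x)
    (hκe : ∀ t : ℝ, κ t u x = 1 - ((G.degree u : ℝ) - 2) / (w t u x * D t u))
    (hflow : ∀ v ∈ G.neighborFinset u, ∀ t : ℝ,
      HasDerivAt (fun s => w s u v) (-(κ t u v) * w t u v) t) :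
    ∀ t : ℝ,
      HasDerivAt (fun s => κ s u x)
        (((G.degree u : ℝ) - 2) / (w t u x * D t u) *
          ((∑ v ∈ G.neighborFinset u, κ t u v / w t u v) /
              (∑ v ∈ G.neighborFinset u, 1 / w t u v) - κ t u x)) t := by
  intro t
  have hw : ∀ v ∈ G.neighborFinset u, 0 < w t u v := fun v hv =>
    hpos t u v ((G.mem_neighborFinset u v).mp hv)
  have hxN : x ∈ G.neighborFinset u := (G.mem_neighborFinset u x).mpr hux
  have hDpos : 0 < D t u := by
    rw [hD]
    exact sum_pos (fun v hv => one_div_pos.mpr (hw v hv)) ⟨x, hxN⟩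
  have hDderiv : HasDerivAt (fun s => D s u) (∑ v ∈ G.neighborFinset u, κ t u v / w t u v) t := by
    simp only [hD]
    exact HasDerivAt.fun_sum fun v hv =>
      (hflow v hv t).one_div_of_hasDerivAt_neg_mul (hw v hv).ne'
  rw [← hD, show (fun s => κ s u x) = _ from funext hκe]
  exact (hflow x hxN t).one_sub_const_div_mul hDderiv (hw x hxN).ne' hDpos.ne'

/-- Derivative of the curvature of a leaf edge `e = ux` along the flow. -/
theorem stmt17 {V : Type*} [Fintype V] [DecidableEq V] (G : SimpleGraph V)
    [DecidableRel G.Adj] (hT : G.IsTree)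
    (w : ℝ → V → V → ℝ)
    (hpos : ∀ t : ℝ, ∀ u v, G.Adj u v → 0 < w t u v)
    (D : ℝ → V → ℝ) (hD : ∀ t u, D t u = ∑ v ∈ G.neighborFinset u, 1 / w t u v)
    (κ : ℝ → V → V → ℝ)
    (u x : V) (hux : G.Adj u x) (hx : G.degree x = 1) (hdu : 2 ≤ G.degree u)
    (hκe : ∀ t : ℝ, κ t u x = 1 - ((G.degree u : ℝ) - 2) / (w t u x * D t u))
    (hflow : ∀ v ∈ G.neighborFinset u, ∀ t : ℝ,
      HasDerivAt (fun s => w s u v) (-(κ t u v) * w t u v) t) :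
    ∀ t : ℝ,
      HasDerivAt (fun s => κ s u x)
        (((G.degree u : ℝ) - 2) / (w t u x * D t u) *
          ((∑ v ∈ G.neighborFinset u, κ t u v / w t u v) /
              (∑ v ∈ G.neighborFinset u, 1 / w t u v) - κ t u x)) t :=
  stmt17_general G w hpos D hD κ u x hux hκe hflow
end

section
/- Let w solve the un-normalized Ricci flow w_h' = -κ_h w_h on a finite tree with κ_{uv} = (2-d_u)/(w_{uv}D_u) + (2-d_v)/(w_{uv}D_v), and let f be an internal edge. If lim_{t→∞} w_f(t) exists and is finite, and the derivative κ_f' is bounded on [0,∞), then lim_{t→∞} κ_f(t) = 0. -/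
/-!
On an internal edge both degrees are at least `2`, so the curvature is nonpositive and the weight
`w` is nondecreasing; its finite limit is therefore positive and `log w` converges too. Since
`(-log w)' = κ` and `κ` is Lipschitz, Barbalat's lemma forces `κ → 0`.
-/

open Filter Topology Set

theorem tendsto_zero_of_hasDerivAt_of_tendsto_of_uniformContinuousOn {F g : ℝ → ℝ} {a L : ℝ}
    (hF : ∀ t, a ≤ t → HasDerivAt F (g t) t) (hFlim : Tendsto F atTop (𝓝 L))
    (hg : UniformContinuousOn g (Ici a)) : Tendsto g atTop (𝓝 0) := by
  rw [Metric.tendsto_atTop]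
  intro ε hε
  obtain ⟨δ, hδ, hgδ⟩ := Metric.uniformContinuousOn_iff.1 hg (ε / 2) (half_pos hε)
  obtain ⟨N, hN⟩ := Metric.cauchySeq_iff.1 hFlim.cauchySeq (ε / 2 * (δ / 2)) (by positivity)
  refine ⟨max N a, fun t ht => ?_⟩
  have hNt : N ≤ t := le_of_max_le_left ht
  have hat : a ≤ t := le_of_max_le_right ht
  rw [Real.dist_eq, sub_zero]
  by_contra! hgt
  -- `g` stays away from zero on `[t, t + δ/2]`, so `F` moves by at least `ε δ / 4` there.
  obtain ⟨c, ⟨htc, hcδ⟩, hc⟩ :=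
    exists_hasDerivAt_eq_slope F g (lt_add_of_pos_right t (half_pos hδ))
    (fun x hx => (hF x (hat.trans hx.1)).continuousAt.continuousWithinAt)
    (fun x hx => hF x (hat.trans hx.1.le))
  have hgc : ε / 2 < |g c| := by
    have hct : dist c t < δ := by rw [Real.dist_eq, abs_of_pos (sub_pos.2 htc)]; linarith
    have := hgδ c (hat.trans htc.le) t hat hct
    rw [Real.dist_eq] at this
    linarith [abs_sub_abs_le_abs_sub (g t) (g c), abs_sub_comm (g c) (g t)]
  have hFc : |F (t + δ / 2) - F t| = |g c| * (δ / 2) := by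
    rw [hc, add_sub_cancel_left, abs_div, abs_of_pos (half_pos hδ),
      div_mul_cancel₀ _ (half_pos hδ).ne']
  have := hN (t + δ / 2) (by linarith) t hNt
  rw [Real.dist_eq, hFc] at this
  nlinarith

theorem le_of_tendsto_of_hasDerivAt_nonneg {f f' : ℝ → ℝ} {a L : ℝ}
    (hf : ∀ t, a ≤ t → HasDerivAt f (f' t) t) (hf' : ∀ t, a ≤ t → 0 ≤ f' t)
    (hlim : Tendsto f atTop (𝓝 L)) : f a ≤ L := by
  have hmono : MonotoneOn f (Ici a) :=
    monotoneOn_of_hasDerivWithinAt_nonneg (convex_Ici a)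
      (fun t ht => (hf t ht).continuousAt.continuousWithinAt)
      (fun t ht => (hf t (interior_subset ht)).hasDerivWithinAt)
      (fun t ht => hf' t (interior_subset ht))
  exact ge_of_tendsto hlim ((eventually_ge_atTop a).mono fun t ht => hmono self_mem_Ici ht ht)

theorem Convex.uniformContinuousOn_of_abs_deriv_le {f : ℝ → ℝ} {s : Set ℝ} {M : ℝ}
    (hs : Convex ℝ s) (hf : ∀ t ∈ s, DifferentiableAt ℝ f t) (hM : ∀ t ∈ s, |deriv f t| ≤ M) :
    UniformContinuousOn f s :=
  (hs.lipschitzOnWith_of_nnnorm_deriv_le (C := M.toNNReal) hf fun t ht => by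
    rw [← NNReal.coe_le_coe, coe_nnnorm, Real.norm_eq_abs]
    exact (hM t ht).trans (M.le_coe_toNNReal)).uniformContinuousOn

theorem sum_neighborFinset_one_div_pos {V : Type*} [Fintype V] (G : SimpleGraph V)
    [DecidableRel G.Adj] {x : V} (hx : 0 < G.degree x) {c : V → ℝ}
    (hc : ∀ y, G.Adj x y → 0 < c y) : 0 < ∑ y ∈ G.neighborFinset x, 1 / c y :=
  Finset.sum_pos (fun y hy => one_div_pos.2 (hc y ((G.mem_neighborFinset x y).1 hy)))
    (by rwa [← Finset.card_pos, G.card_neighborFinset_eq_degree])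

theorem curvature_nonpos_of_two_le_degree {V : Type*} [Fintype V] (G : SimpleGraph V)
    [DecidableRel G.Adj] {w : V → V → ℝ} (hw : ∀ x y, G.Adj x y → 0 < w x y) {u v : V}
    (huv : G.Adj u v) (hdu : 2 ≤ G.degree u) (hdv : 2 ≤ G.degree v) :
    (2 - (G.degree u : ℝ)) / (w u v * ∑ y ∈ G.neighborFinset u, 1 / w u y) +
      (2 - (G.degree v : ℝ)) / (w u v * ∑ y ∈ G.neighborFinset v, 1 / w v y) ≤ 0 := by
  have hDu := sum_neighborFinset_one_div_pos G (c := w u) (by omega) (hw u)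
  have hDv := sum_neighborFinset_one_div_pos G (c := w v) (by omega) (hw v)
  have hdu' : (2 : ℝ) ≤ G.degree u := by exact_mod_cast hdu
  have hdv' : (2 : ℝ) ≤ G.degree v := by exact_mod_cast hdv
  have hwuv := hw u v huv
  exact add_nonpos (div_nonpos_of_nonpos_of_nonneg (by linarith) (by positivity))
    (div_nonpos_of_nonpos_of_nonneg (by linarith) (by positivity))

theorem stmt19_general {V : Type*} [Fintype V] (G : SimpleGraph V)
    [DecidableRel G.Adj]
    (w : ℝ → V → V → ℝ)
    (hpos : ∀ t : ℝ, 0 ≤ t → ∀ u v, G.Adj u v → 0 < w t u v)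
    (D : ℝ → V → ℝ) (hD : ∀ t u, D t u = ∑ v ∈ G.neighborFinset u, 1 / w t u v)
    (κ : ℝ → V → V → ℝ)
    (hκ : ∀ t u v, G.Adj u v → κ t u v =
      (2 - (G.degree u : ℝ)) / (w t u v * D t u) + (2 - (G.degree v : ℝ)) / (w t u v * D t v))
    (hflow : ∀ u v, G.Adj u v → ∀ t : ℝ, 0 ≤ t →
      HasDerivAt (fun s => w s u v) (-(κ t u v) * w t u v) t)
    (u v : V) (huv : G.Adj u v) (hdu : 2 ≤ G.degree u) (hdv : 2 ≤ G.degree v)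
    (L : ℝ) (hlim : Filter.Tendsto (fun t => w t u v) Filter.atTop (nhds L))
    (hκdiff : ∀ t : ℝ, 0 ≤ t → DifferentiableAt ℝ (fun s => κ s u v) t)
    (hκbd : ∃ M : ℝ, ∀ t : ℝ, 0 ≤ t → |deriv (fun s => κ s u v) t| ≤ M) :
    Filter.Tendsto (fun t => κ t u v) Filter.atTop (nhds 0) := by
  obtain ⟨M, hM⟩ := hκbd
  have hw : ∀ t, 0 ≤ t → 0 < w t u v := fun t ht => hpos t ht u v huv
  have hκ_nonpos : ∀ t, 0 ≤ t → κ t u v ≤ 0 := fun t ht => by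
    rw [hκ t u v huv, hD, hD]
    exact curvature_nonpos_of_two_le_degree G (hpos t ht) huv hdu hdv
  have hL : 0 < L := (hw 0 le_rfl).trans_le <|
    le_of_tendsto_of_hasDerivAt_nonneg (hflow u v huv)
      (fun t ht => mul_nonneg (neg_nonneg.2 (hκ_nonpos t ht)) (hw t ht).le) hlim
  have hlog_deriv : ∀ t, 0 ≤ t → HasDerivAt (fun s => -Real.log (w s u v)) (κ t u v) t :=
    fun t ht => ((hflow u v huv t ht).log (hw t ht).ne').neg.congr_deriv (by
      rw [mul_div_cancel_right₀ _ (hw t ht).ne', neg_neg])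
  exact tendsto_zero_of_hasDerivAt_of_tendsto_of_uniformContinuousOn hlog_deriv
    ((Real.continuousAt_log hL.ne').tendsto.comp hlim).neg
    ((convex_Ici 0).uniformContinuousOn_of_abs_deriv_le hκdiff hM)

/-- If the weight of an internal edge converges to a finite limit under the
Ricci flow and its curvature has bounded derivative, then the curvature tends
to zero. -/
theorem stmt19 {V : Type*} [Fintype V] [DecidableEq V] (G : SimpleGraph V)
    [DecidableRel G.Adj] (hT : G.IsTree)
    (w : ℝ → V → V → ℝ)
    (hsymm : ∀ t u v, w t u v = w t v u)
    (hpos : ∀ t : ℝ, 0 ≤ t → ∀ u v, G.Adj u v → 0 < w t u v)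
    (D : ℝ → V → ℝ) (hD : ∀ t u, D t u = ∑ v ∈ G.neighborFinset u, 1 / w t u v)
    (κ : ℝ → V → V → ℝ)
    (hκ : ∀ t u v, G.Adj u v → κ t u v =
      (2 - (G.degree u : ℝ)) / (w t u v * D t u) + (2 - (G.degree v : ℝ)) / (w t u v * D t v))
    (hflow : ∀ u v, G.Adj u v → ∀ t : ℝ, 0 ≤ t →
      HasDerivAt (fun s => w s u v) (-(κ t u v) * w t u v) t)
    (u v : V) (huv : G.Adj u v) (hdu : 2 ≤ G.degree u) (hdv : 2 ≤ G.degree v)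
    (L : ℝ) (hlim : Filter.Tendsto (fun t => w t u v) Filter.atTop (nhds L))
    (hκdiff : ∀ t : ℝ, 0 ≤ t → DifferentiableAt ℝ (fun s => κ s u v) t)
    (hκbd : ∃ M : ℝ, ∀ t : ℝ, 0 ≤ t → |deriv (fun s => κ s u v) t| ≤ M) :
    Filter.Tendsto (fun t => κ t u v) Filter.atTop (nhds 0) :=
  stmt19_general G w hpos D hD κ hκ hflow u v huv hdu hdv L hlim hκdiff hκbd
end
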